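/- arXiv:2309.04922 — 2 statements merged into one kernel-verified Lean document; each statement's English description precedes it below -/
import Mathlib

section
/- Fix constants α, β > 0, d* < d, and ρ > 0. Define h : (0,∞) → ℝ by h(g) = d - √(2/π)·ρ·α·g·exp(-(d* - d)²/(2β²g²)) / (1 + erf((d* - d)/(√2 βg))). Then h is strictly monotonically decreasing in g. -/
/-! Put `v = (d - d*) / (√2 β g)`, which decreases as `g` grows. Then
`h(g) = d - c / (v · erfcx v)` with `c > 0` and `erfcx v = e^{v²} (1 - erf v)`, so it suffices that
`v ↦ v · erfcx v` is strictly increasing. Its derivative `(1 + 2v²) erfcx v - 2v/√π` is positive by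
Gordon's inequality `v e^{-v²} / (2v² + 1) < ∫_v^∞ e^{-t²} dt`, which holds because the difference of
the two sides is strictly decreasing with limit `0` at `+∞`. -/

open Real

/-- The Gauss error function `erf x = (2/√π) ∫₀ˣ e^{-t²} dt`. -/
noncomputable def erf (x : ℝ) : ℝ := (2 / Real.sqrt Real.pi) * ∫ t in (0:ℝ)..x, Real.exp (-t^2)

open Filter Topology MeasureTheory

lemma hasDerivAt_erf (x : ℝ) : HasDerivAt erf (2 / √π * exp (-x ^ 2)) x := by
  have hcont : Continuous fun t : ℝ => exp (-t ^ 2) := by fun_prop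
  exact (intervalIntegral.integral_hasDerivAt_right (hcont.intervalIntegrable 0 x)
    (hcont.stronglyMeasurableAtFilter _ _) hcont.continuousAt).const_mul _

lemma strictMono_erf : StrictMono erf :=
  strictMono_of_deriv_pos fun x => by rw [(hasDerivAt_erf x).deriv]; positivity

lemma erf_neg (x : ℝ) : erf (-x) = -erf x := by
  have h := intervalIntegral.integral_comp_neg (a := 0) (b := x) fun t : ℝ => exp (-t ^ 2)
  simp only [neg_sq, neg_zero] at h
  rw [erf, erf, intervalIntegral.integral_symm (-x) 0, ← h, mul_neg]

lemma tendsto_erf_atTop : Tendsto erf atTop (𝓝 1) := by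
  have h := intervalIntegral_tendsto_integral_Ioi (μ := volume) 0
    (by simpa using (integrable_exp_neg_mul_sq one_pos).integrableOn) tendsto_id
  have hgauss : ∫ t in Set.Ioi (0 : ℝ), exp (-t ^ 2) = √π / 2 := by
    simpa using integral_gaussian_Ioi 1
  rw [hgauss] at h
  rw [show (1 : ℝ) = 2 / √π * (√π / 2) by field_simp]
  exact h.const_mul _

lemma erf_lt_one (x : ℝ) : erf x < 1 :=
  (strictMono_erf (lt_add_one x)).trans_le
    (strictMono_erf.monotone.ge_of_tendsto tendsto_erf_atTop _)

lemma tendsto_mul_exp_neg_sq_div_atTop :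
    Tendsto (fun t : ℝ => t * exp (-t ^ 2) / (2 * t ^ 2 + 1)) atTop (𝓝 0) := by
  have hexp : Tendsto (fun t : ℝ => exp (-t ^ 2)) atTop (𝓝 0) :=
    tendsto_exp_atBot.comp (tendsto_neg_atTop_atBot.comp (tendsto_pow_atTop two_ne_zero))
  apply tendsto_of_tendsto_of_tendsto_of_le_of_le' tendsto_const_nhds hexp
  · filter_upwards [eventually_ge_atTop 0] with t ht
    positivity
  · filter_upwards [eventually_ge_atTop 0] with t ht
    rw [div_le_iff₀ (by positivity)]
    nlinarith [exp_pos (-t ^ 2), sq_nonneg (t - 1)]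

/-- Gordon's lower bound for the Gaussian tail `∫_v^∞ e^{-t²} dt = √π/2 · (1 - erf v)`. -/
lemma mul_exp_neg_sq_div_lt_sqrt_pi_div_two_mul_one_sub_erf (v : ℝ) :
    v * exp (-v ^ 2) / (2 * v ^ 2 + 1) < √π / 2 * (1 - erf v) := by
  set gap : ℝ → ℝ := fun t => √π / 2 * (1 - erf t) - t * exp (-t ^ 2) / (2 * t ^ 2 + 1)
  have hderiv (t : ℝ) : HasDerivAt gap (-(2 * exp (-t ^ 2) / (2 * t ^ 2 + 1) ^ 2)) t := by
    have hnum : HasDerivAt (fun t : ℝ => t * exp (-t ^ 2))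
        (1 * exp (-t ^ 2) + t * (exp (-t ^ 2) * -(2 * t))) t :=
      (hasDerivAt_id t).mul (((hasDerivAt_pow 2 t).neg.congr_deriv (by ring)).exp)
    have hden : HasDerivAt (fun t : ℝ => 2 * t ^ 2 + 1) (2 * (2 * t)) t :=
      ((hasDerivAt_pow 2 t).const_mul 2).add_const 1 |>.congr_deriv (by ring)
    refine (((hasDerivAt_erf t).const_sub 1).const_mul (√π / 2)).sub
      (hnum.div hden (by positivity)) |>.congr_deriv ?_
    field_simp
    ring
  have hanti : StrictAnti gap :=
    strictAnti_of_deriv_neg fun t => by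
      rw [(hderiv t).deriv, neg_lt_zero]; positivity
  have hlim : Tendsto gap atTop (𝓝 0) := by
    simpa using ((tendsto_erf_atTop.const_sub 1).const_mul (√π / 2)).sub
      tendsto_mul_exp_neg_sq_div_atTop
  have := (hanti (lt_add_one v)).trans_le' (hanti.antitone.le_of_tendsto hlim _)
  simp only [gap] at this
  linarith

noncomputable def erfcx (x : ℝ) : ℝ := exp (x ^ 2) * (1 - erf x)

lemma erfcx_pos (x : ℝ) : 0 < erfcx x :=
  mul_pos (exp_pos _) (sub_pos.2 (erf_lt_one x))

lemma hasDerivAt_erfcx (x : ℝ) : HasDerivAt erfcx (2 * x * erfcx x - 2 / √π) x := by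
  have hexp : HasDerivAt (fun x : ℝ => exp (x ^ 2)) (exp (x ^ 2) * (2 * x)) x :=
    ((hasDerivAt_pow 2 x).congr_deriv (by ring)).exp
  refine (hexp.mul ((hasDerivAt_erf x).const_sub 1)).congr_deriv ?_
  rw [erfcx, exp_neg]
  field_simp [(exp_pos (x ^ 2)).ne']
  ring

lemma strictMono_mul_erfcx : StrictMono fun x => x * erfcx x := by
  refine strictMono_of_deriv_pos fun x => ?_
  rw [((hasDerivAt_id' x).fun_mul (hasDerivAt_erfcx x)).deriv]
  have hgordon : 2 * x / √π < (2 * x ^ 2 + 1) * erfcx x := by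
    have h := mul_exp_neg_sq_div_lt_sqrt_pi_div_two_mul_one_sub_erf x
    rw [div_lt_iff₀ (by positivity)] at h
    calc 2 * x / √π = 2 / √π * exp (x ^ 2) * (x * exp (-x ^ 2)) := by
          rw [exp_neg]; field_simp
      _ < 2 / √π * exp (x ^ 2) * (√π / 2 * (1 - erf x) * (2 * x ^ 2 + 1)) :=
          mul_lt_mul_of_pos_left h (by positivity)
      _ = (2 * x ^ 2 + 1) * erfcx x := by
          unfold erfcx; field_simp
  calc 0 < (2 * x ^ 2 + 1) * erfcx x - 2 * x / √π := sub_pos.2 hgordon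
    _ = 1 * erfcx x + x * (2 * x * erfcx x - 2 / √π) := by ring

/-- For positive correlation `ρ > 0`, the conditional expected inter-vehicle distance
is strictly decreasing in the diffusion coefficient `g`. -/
theorem conditional_expectation_strictAnti_in_g
    (α β d dstar ρ : ℝ) (hα : 0 < α) (hβ : 0 < β) (hd : dstar < d) (hρ : 0 < ρ) :
    StrictAntiOn (fun g : ℝ =>
      d - Real.sqrt (2 / Real.pi) * (ρ * α * g * Real.exp (-(dstar - d)^2 / (2 * β^2 * g^2))) /
        (1 + erf ((dstar - d) / (Real.sqrt 2 * (β * g))))) (Set.Ioi (0 : ℝ)) := by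
  set C := (d - dstar) / (√2 * β) with hC_def
  have hC : 0 < C := div_pos (sub_pos.2 hd) (by positivity)
  have hrepr (g : ℝ) (hg : 0 < g) :
      d - √(2 / π) * (ρ * α * g * exp (-(dstar - d) ^ 2 / (2 * β ^ 2 * g ^ 2))) /
        (1 + erf ((dstar - d) / (√2 * (β * g))))
      = d - √(2 / π) * ρ * α * C / (C / g * erfcx (C / g)) := by
    have harg : (dstar - d) / (√2 * (β * g)) = -(C / g) := by
      rw [hC_def]; field_simp; ring
    have hexp : -(dstar - d) ^ 2 / (2 * β ^ 2 * g ^ 2) = -(C / g) ^ 2 := by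
      rw [div_pow, div_pow, mul_pow, sq_sqrt zero_le_two]; field_simp; ring
    rw [harg, erf_neg, hexp, erfcx, exp_neg]
    field_simp
    ring
  intro g₁ hg₁ g₂ hg₂ hlt
  beta_reduce
  rw [hrepr g₁ hg₁, hrepr g₂ hg₂]
  have hmono := strictMono_mul_erfcx (div_lt_div_of_pos_left hC hg₁ hlt)
  have hpos : 0 < C / g₂ * erfcx (C / g₂) := mul_pos (div_pos hC hg₂) (erfcx_pos _)
  gcongr
end

section
/- Fix constants α, β > 0, d* < d, and ρ < 0. Define h : (0,∞) → ℝ by h(g) = d - √(2/π)·ρ·α·g·exp(-(d* - d)²/(2β²g²)) / (1 + erf((d* - d)/(√2 βg))). Then h is strictly monotonically increasing in g. -/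
/-!
Write `F y = ∫_{-∞}^y e^{-t²} dt`, so that `1 + erf y = (2/√π) F y`, and `y = (d* - d)/(√2 β g)`,
which is negative and increasing in `g`. Since `g = (d* - d)/(√2 β y)`, the expectation becomes
`d + C / M y` with `C = ρα(d* - d)/(2β) > 0` and `M y = -y e^{y²} F y > 0`. It therefore suffices
that `M` is strictly decreasing, i.e. `M' y = -(1 + 2y²) e^{y²} F y - y < 0`, which is Gordon's
lower bound `F y > -y e^{-y²}/(1 + 2y²)` for the Gaussian tail. The bound holds because the gap
between the two sides tends to `0` at `-∞` and has the positive derivative `2e^{-y²}/(1 + 2y²)²`.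
-/

open Real

open MeasureTheory Set Filter Topology

lemma integrable_exp_neg_sq : Integrable fun t : ℝ => exp (-t ^ 2) := by
  simpa using integrable_exp_neg_mul_sq one_pos

noncomputable def gaussIntegralIic (x : ℝ) : ℝ := ∫ t in Iic x, exp (-t ^ 2)

lemma gaussIntegralIic_pos (x : ℝ) : 0 < gaussIntegralIic x := by
  refine (setIntegral_pos_iff_support_of_nonneg_ae
    (.of_forall fun t => (exp_pos _).le) integrable_exp_neg_sq.integrableOn).2 ?_
  have hsupp : Function.support (fun t : ℝ => exp (-t ^ 2)) = univ :=
    Function.support_eq_univ fun t => (exp_pos _).ne'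
  simp [hsupp]

lemma gaussIntegralIic_sub_gaussIntegralIic (x y : ℝ) :
    gaussIntegralIic y - gaussIntegralIic x = ∫ t in x..y, exp (-t ^ 2) :=
  intervalIntegral.integral_Iic_sub_Iic integrable_exp_neg_sq.integrableOn
    integrable_exp_neg_sq.integrableOn

lemma gaussIntegralIic_zero : gaussIntegralIic 0 = √π / 2 := by
  have hIoi := integral_gaussian_Ioi 1
  have hreflect := integral_comp_neg_Iic 0 fun t => exp (-t ^ 2)
  simp only [one_mul, neg_mul, div_one] at hIoi
  simp only [neg_sq, neg_zero] at hreflect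
  rw [gaussIntegralIic, hreflect, hIoi]

lemma one_add_erf (x : ℝ) : 1 + erf x = 2 / √π * gaussIntegralIic x := by
  have hsqrt : √π ≠ 0 := (sqrt_pos.2 pi_pos).ne'
  rw [erf, ← gaussIntegralIic_sub_gaussIntegralIic, gaussIntegralIic_zero]
  field_simp
  ring

lemma hasDerivAt_gaussIntegralIic (x : ℝ) : HasDerivAt gaussIntegralIic (exp (-x ^ 2)) x := by
  have hcont : Continuous fun t : ℝ => exp (-t ^ 2) := by fun_prop
  have hF : gaussIntegralIic =
      fun u => gaussIntegralIic 0 + ∫ t in (0 : ℝ)..u, exp (-t ^ 2) := by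
    funext u
    rw [← gaussIntegralIic_sub_gaussIntegralIic, add_sub_cancel]
  rw [hF]
  exact (hcont.integral_hasStrictDerivAt 0 x).hasDerivAt.const_add _

lemma tendsto_gaussIntegralIic_atBot : Tendsto gaussIntegralIic atBot (𝓝 0) := by
  have h := (intervalIntegral_tendsto_integral_Iic 0 integrable_exp_neg_sq.integrableOn
    tendsto_id).const_sub (gaussIntegralIic 0)
  rw [← gaussIntegralIic, sub_self] at h
  refine h.congr fun x => ?_
  rw [id, ← gaussIntegralIic_sub_gaussIntegralIic, sub_sub_cancel]

/-- Gordon's lower bound `u e^{-u²}/(1 + 2u²)` for `∫_u^∞ e^{-t²} dt`, at `u = -y`. -/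
noncomputable def gordonBound (y : ℝ) : ℝ := -y * exp (-y ^ 2) / (1 + 2 * y ^ 2)

lemma hasDerivAt_gordonBound (y : ℝ) :
    HasDerivAt gordonBound (exp (-y ^ 2) - 2 * exp (-y ^ 2) / (1 + 2 * y ^ 2) ^ 2) y := by
  have hexp : HasDerivAt (fun y : ℝ => exp (-y ^ 2)) (exp (-y ^ 2) * -(2 * y)) y := by
    simpa using (hasDerivAt_pow 2 y).neg.exp
  have hden : HasDerivAt (fun y : ℝ => 1 + 2 * y ^ 2) (2 * (2 * y)) y := by
    simpa using ((hasDerivAt_pow 2 y).const_mul 2).const_add 1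
  have hpos : (0 : ℝ) < 1 + 2 * y ^ 2 := by positivity
  refine (((hasDerivAt_neg y).fun_mul hexp).fun_div hden hpos.ne').congr_deriv ?_
  field_simp
  ring

lemma tendsto_gordonBound_atBot : Tendsto gordonBound atBot (𝓝 0) := by
  refine squeeze_zero_norm' ?_ tendsto_exp_atBot
  filter_upwards [eventually_le_atBot (-1 : ℝ)] with y hy
  have hden : (0 : ℝ) < 1 + 2 * y ^ 2 := by positivity
  have hexp : exp (-y ^ 2) ≤ exp y := exp_le_exp.2 (by nlinarith)
  rw [gordonBound, norm_div, norm_mul, Real.norm_of_nonneg (exp_pos _).le,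
    Real.norm_of_nonneg hden.le, norm_neg, Real.norm_of_nonpos (by linarith),
    div_le_iff₀ hden]
  nlinarith [mul_le_mul_of_nonneg_left hexp (by linarith : 0 ≤ -y),
    mul_nonneg (by nlinarith : 0 ≤ 1 + 2 * y ^ 2 + y) (exp_pos y).le]

lemma gordonBound_lt_gaussIntegralIic (y : ℝ) : gordonBound y < gaussIntegralIic y := by
  have hgap : StrictMono fun z => gaussIntegralIic z - gordonBound z :=
    strictMono_of_deriv_pos fun z => by
      rw [((hasDerivAt_gaussIntegralIic z).fun_sub (hasDerivAt_gordonBound z)).deriv,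
        sub_sub_cancel]
      positivity
  have hlim : Tendsto (fun z => gaussIntegralIic z - gordonBound z) atBot (𝓝 0) := by
    simpa using tendsto_gaussIntegralIic_atBot.sub tendsto_gordonBound_atBot
  exact sub_pos.1 <| (hgap.monotone.le_of_tendsto hlim (y - 1)).trans_lt (hgap (sub_one_lt y))

/-- For `u = -y > 0` this is `u` times the Mills ratio `e^{u²} ∫_u^∞ e^{-t²} dt`. -/
noncomputable def gaussMillsProduct (y : ℝ) : ℝ := -y * exp (y ^ 2) * gaussIntegralIic y

lemma gaussMillsProduct_pos {y : ℝ} (hy : y < 0) : 0 < gaussMillsProduct y :=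
  mul_pos (mul_pos (neg_pos.2 hy) (exp_pos _)) (gaussIntegralIic_pos y)

lemma hasDerivAt_gaussMillsProduct (y : ℝ) :
    HasDerivAt gaussMillsProduct
      (-(1 + 2 * y ^ 2) * exp (y ^ 2) * gaussIntegralIic y - y) y := by
  have hexp : HasDerivAt (fun y : ℝ => exp (y ^ 2)) (exp (y ^ 2) * (2 * y)) y := by
    simpa using (hasDerivAt_pow 2 y).exp
  have hinv : exp (y ^ 2) * exp (-y ^ 2) = 1 := by rw [← exp_add]; simp
  refine (((hasDerivAt_neg y).fun_mul hexp).fun_mul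
    (hasDerivAt_gaussIntegralIic y)).congr_deriv ?_
  linear_combination -y * hinv

lemma strictAnti_gaussMillsProduct : StrictAnti gaussMillsProduct :=
  strictAnti_of_deriv_neg fun y => by
    rw [(hasDerivAt_gaussMillsProduct y).deriv]
    have hden : (0 : ℝ) < 1 + 2 * y ^ 2 := by positivity
    have hgordon := (div_lt_iff₀ hden).1 (gordonBound_lt_gaussIntegralIic y)
    have hinv : exp (-y ^ 2) * exp (y ^ 2) = 1 := by rw [← exp_add]; simp
    have key := mul_lt_mul_of_pos_right hgordon (exp_pos (y ^ 2))
    rw [mul_assoc, hinv, mul_one] at key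
    linarith

lemma sub_div_one_add_erf_eq_add_div_gaussMillsProduct {α β d dstar ρ g : ℝ} (hβ : β ≠ 0)
    (hd : dstar ≠ d) (hg : g ≠ 0) :
    d - √(2 / π) * (ρ * α * g * exp (-(dstar - d) ^ 2 / (2 * β ^ 2 * g ^ 2))) /
        (1 + erf ((dstar - d) / (√2 * (β * g)))) =
      d + ρ * α * (dstar - d) / (2 * β) /
        gaussMillsProduct ((dstar - d) / (√2 * (β * g))) := by
  set y := (dstar - d) / (√2 * (β * g)) with hy
  have hy0 : y ≠ 0 := div_ne_zero (sub_ne_zero.2 hd) (by positivity)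
  have hdiff : dstar - d = y * (√2 * (β * g)) := by rw [hy]; field_simp
  have hsq2 : √2 ^ 2 = 2 := sq_sqrt zero_le_two
  have harg : -(dstar - d) ^ 2 / (2 * β ^ 2 * g ^ 2) = -y ^ 2 := by
    rw [hdiff]; field_simp; rw [hsq2]
  have hinv : exp (y ^ 2) * exp (-y ^ 2) = 1 := by rw [← exp_add]; simp
  have hF := (gaussIntegralIic_pos y).ne'
  rw [harg, one_add_erf, gaussMillsProduct, sqrt_div' 2 pi_pos.le, hdiff]
  field_simp
  linear_combination (-(√2 * ρ * α * g)) * hinv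

/-- For negative correlation `ρ < 0`, the conditional expected inter-vehicle distance
is strictly increasing in the diffusion coefficient `g`. -/
theorem conditional_expectation_strictMono_in_g
    (α β d dstar ρ : ℝ) (hα : 0 < α) (hβ : 0 < β) (hd : dstar < d) (hρ : ρ < 0) :
    StrictMonoOn (fun g : ℝ =>
      d - Real.sqrt (2 / Real.pi) * (ρ * α * g * Real.exp (-(dstar - d)^2 / (2 * β^2 * g^2))) /
        (1 + erf ((dstar - d) / (Real.sqrt 2 * (β * g))))) (Set.Ioi (0 : ℝ)) := by
  intro g₁ (hg₁ : 0 < g₁) g₂ (hg₂ : 0 < g₂) hg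
  have hC : 0 < ρ * α * (dstar - d) / (2 * β) :=
    div_pos (mul_pos_of_neg_of_neg (mul_neg_of_neg_of_pos hρ hα) (sub_neg.2 hd)) (by positivity)
  have hy : (dstar - d) / (√2 * (β * g₁)) < (dstar - d) / (√2 * (β * g₂)) := by
    rw [div_lt_div_iff₀ (by positivity) (by positivity)]
    exact mul_lt_mul_of_neg_left (by gcongr) (sub_neg.2 hd)
  have hy₂ : (dstar - d) / (√2 * (β * g₂)) < 0 :=
    div_neg_of_neg_of_pos (sub_neg.2 hd) (by positivity)
  simp only
  rw [sub_div_one_add_erf_eq_add_div_gaussMillsProduct hβ.ne' hd.ne hg₁.ne',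
    sub_div_one_add_erf_eq_add_div_gaussMillsProduct hβ.ne' hd.ne hg₂.ne']
  exact (add_lt_add_iff_left d).2 (div_lt_div_of_pos_left hC (gaussMillsProduct_pos hy₂)
    (strictAnti_gaussMillsProduct hy))
end
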